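/- arXiv:1602.07504 — 3 statements merged into one kernel-verified Lean document; each statement's English description precedes it below -/
import Mathlib

section
/- Every split graph G on n vertices has at most n minimal connected vertex covers. -/
/-- `U` is a vertex cover of `G`: every edge has at least one endpoint in `U`. -/
def IsVertexCover {V : Type*} (G : SimpleGraph V) (U : Set V) : Prop :=
  ∀ ⦃a b : V⦄, G.Adj a b → a ∈ U ∨ b ∈ U

/-- `U` is a connected vertex cover of `G`. -/
def IsCVC {V : Type*} (G : SimpleGraph V) (U : Set V) : Prop :=
  IsVertexCover G U ∧ (G.induce U).Connected

/-- `U` is a minimal connected vertex cover of `G`. -/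
def IsMinCVC {V : Type*} (G : SimpleGraph V) (U : Set V) : Prop :=
  IsCVC G U ∧ ∀ W : Set V, W ⊂ U → ¬ IsCVC G W

/-- `G` is a split graph: its vertex set can be partitioned into a clique `K`
and an independent set `I`. -/
def IsSplitGraph {V : Type*} (G : SimpleGraph V) : Prop :=
  ∃ K I : Set V, K ∪ I = Set.univ ∧ Disjoint K I ∧
    G.IsClique K ∧ (∀ x ∈ I, ∀ y ∈ I, ¬ G.Adj x y)

section Aux

variable {V : Type*}

/-- connectedness of an induced subgraph via a hub vertex -/
lemma aux_connected_hub (G : SimpleGraph V) {s : Set V} (h : ↥s)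
    (H : ∀ y : ↥s, (G.induce s).Reachable y h) : (G.induce s).Connected :=
  (SimpleGraph.connected_iff_exists_forall_reachable _).mpr ⟨h, fun w => (H w).symm⟩

lemma aux_exists_adj {α : Type*} {G' : SimpleGraph α} {x y : α}
    (h : G'.Reachable x y) (hne : x ≠ y) : ∃ z, G'.Adj x z := by
  obtain ⟨w⟩ := h
  cases w with
  | nil => exact absurd rfl hne
  | cons h _ => exact ⟨_, h⟩

lemma aux_eq_of_edgeless {α : Type*} {G' : SimpleGraph α} (hc : G'.Preconnected)
    (he : ∀ a b, ¬ G'.Adj a b) (x y : α) : x = y := by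
  obtain ⟨w⟩ := hc x y
  cases w with
  | nil => rfl
  | cons h _ => exact absurd h (he _ _)

lemma aux_key (G : SimpleGraph V) {K I : Set V} (hUnion : K ∪ I = Set.univ)
    (hDisj : Disjoint K I) (hClique : G.IsClique K)
    (hInd : ∀ x ∈ I, ∀ y ∈ I, ¬ G.Adj x y)
    {a0 b0 : V} (hE : G.Adj a0 b0)
    {U : Set V} (hU : IsMinCVC G U) {v : V} (hvK : v ∈ K) (hvU : v ∉ U) :
    U = (K \ {v}) ∪ {u | u ∈ I ∧ G.Adj v u} := by
  obtain ⟨⟨hcov, hconn⟩, hmin⟩ := hU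
  have hKI : ∀ x : V, x ∈ K ∨ x ∈ I := by
    intro x
    have hx : x ∈ K ∪ I := by rw [hUnion]; exact Set.mem_univ x
    exact hx
  have hdisj' : ∀ x, x ∈ K → x ∈ I → False :=
    fun x hx hy => Set.disjoint_left.mp hDisj hx hy
  have hedgeK : ∀ a b, G.Adj a b → a ∈ K ∨ b ∈ K := by
    intro a b h
    rcases hKI a with ha | ha
    · exact Or.inl ha
    rcases hKI b with hb | hb
    · exact Or.inr hb
    · exact absurd h (hInd _ ha _ hb)
  have hKsub : K \ {v} ⊆ U := by
    rintro w ⟨hwK, hwv⟩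
    have hwv' : w ≠ v := hwv
    rcases hcov (hClique hvK hwK (Ne.symm hwv')) with h | h
    · exact absurd h hvU
    · exact h
  have hNsub : {u | u ∈ I ∧ G.Adj v u} ⊆ U := by
    rintro u ⟨_, hadj⟩
    rcases hcov hadj with h | h
    · exact absurd h hvU
    · exact h
  refine Set.Subset.antisymm ?_ (Set.union_subset hKsub hNsub)
  by_contra hns
  obtain ⟨x, hxU, hxW⟩ := Set.not_subset.mp hns
  have hxK : x ∉ K := by
    intro h
    rcases eq_or_ne x v with rfl | hxv
    · exact hvU hxU
    · exact hxW (Or.inl ⟨h, hxv⟩)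
  have hxI : x ∈ I := (hKI x).resolve_left hxK
  have hxadj : ¬ G.Adj v x := fun h => hxW (Or.inr ⟨hxI, h⟩)
  by_cases hk : ∃ k, k ∈ K ∧ k ≠ v
  · obtain ⟨k, hkK, hkv⟩ := hk
    have hkU : k ∈ U := hKsub ⟨hkK, hkv⟩
    have hkx : k ≠ x := fun h => hdisj' k hkK (h ▸ hxI)
    have hcov2 : IsVertexCover G (U \ {x}) := by
      have main : ∀ a b, G.Adj a b → a ∈ K → a ∈ U \ {x} ∨ b ∈ U \ {x} := by
        intro a b hadj haK
        by_cases hav : a = v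
        · subst hav
          right
          rcases hKI b with hbK | hbI
          · have hbv : b ≠ a := (hadj.ne).symm
            refine ⟨hKsub ⟨hbK, hbv⟩, ?_⟩
            intro hb
            have : b = x := hb
            exact hdisj' b hbK (this ▸ hxI)
          · have hbU : b ∈ U := hNsub ⟨hbI, hadj⟩
            refine ⟨hbU, ?_⟩
            intro hb
            have hbx : b = x := hb
            subst hbx
            exact hxadj hadj
        · left
          refine ⟨hKsub ⟨haK, hav⟩, ?_⟩
          intro ha
          have : a = x := ha
          exact hdisj' a haK (this ▸ hxI)
      intro a b hadj
      rcases hedgeK a b hadj with h | h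
      · exact main a b hadj h
      · rcases main b a hadj.symm h with h' | h'
        · exact Or.inr h'
        · exact Or.inl h'
    have hconn2 : (G.induce (U \ {x})).Connected := by
      have hkmem : k ∈ U \ {x} := ⟨hkU, hkx⟩
      apply aux_connected_hub G ⟨k, hkmem⟩
      rintro ⟨y, hyU, hyx⟩
      have hyx' : y ≠ x := hyx
      rcases hKI y with hyK | hyI
      · rcases eq_or_ne y k with h | hyk
        · subst h; exact SimpleGraph.Reachable.refl _
        · exact SimpleGraph.Adj.reachable (hClique hyK hkK hyk)
      · have hyk : y ≠ k := fun h => hdisj' y (h ▸ hkK) hyI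
        have hreach : (G.induce U).Reachable ⟨y, hyU⟩ ⟨k, hkU⟩ := hconn.preconnected _ _
        obtain ⟨z, hz⟩ := aux_exists_adj hreach (by simp [hyk])
        have hzadj : G.Adj y z.val := hz
        have hzK : z.val ∈ K := (hedgeK y z.val hzadj).resolve_left (fun h => hdisj' y h hyI)
        have hzx : z.val ≠ x := fun h => hdisj' z.val hzK (h ▸ hxI)
        have hzmem : z.val ∈ U \ {x} := ⟨z.2, hzx⟩
        have r1 : (G.induce (U \ {x})).Reachable ⟨y, ⟨hyU, hyx⟩⟩ ⟨z.val, hzmem⟩ :=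
          SimpleGraph.Adj.reachable hzadj
        have r2 : (G.induce (U \ {x})).Reachable ⟨z.val, hzmem⟩ ⟨k, hkmem⟩ := by
          rcases eq_or_ne z.val k with h | h
          · rw [show (⟨z.val, hzmem⟩ : ↥(U \ {x})) = ⟨k, hkmem⟩ from Subtype.ext h]
          · exact SimpleGraph.Adj.reachable (hClique hzK hkK h)
        exact r1.trans r2
    have hx_ss : U \ {x} ⊂ U := Set.sdiff_singleton_ssubset.mpr hxU
    exact hmin _ hx_ss ⟨hcov2, hconn2⟩
  · push_neg at hk
    have hKv : ∀ y, y ∈ K → y = v := hk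
    have hedgeless : ∀ a b : ↥U, ¬ (G.induce U).Adj a b := by
      intro a b hadj
      have hadj' : G.Adj a.val b.val := hadj
      rcases hedgeK a.val b.val hadj' with h | h
      · exact hvU ((hKv _ h) ▸ a.2)
      · exact hvU ((hKv _ h) ▸ b.2)
    have hsub : ∀ y z : ↥U, y = z := aux_eq_of_edgeless hconn.preconnected hedgeless
    rcases hedgeK a0 b0 hE with h | h
    · have ha0v : a0 = v := hKv a0 h
      subst ha0v
      have hb0U : b0 ∈ U := (hcov hE).resolve_left hvU
      have : b0 = x := congrArg Subtype.val (hsub ⟨b0, hb0U⟩ ⟨x, hxU⟩)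
      exact hxadj (this ▸ hE)
    · have hb0v : b0 = v := hKv b0 h
      subst hb0v
      have ha0U : a0 ∈ U := (hcov hE).resolve_right hvU
      have : a0 = x := congrArg Subtype.val (hsub ⟨a0, ha0U⟩ ⟨x, hxU⟩)
      exact hxadj (this ▸ hE.symm)

end Aux

theorem stmt15 {V : Type*} [Fintype V] (G : SimpleGraph V) (hG : IsSplitGraph G) :
    {U : Set V | IsMinCVC G U}.ncard ≤ Fintype.card V := by
  classical
  obtain ⟨K, I, hUnion, hDisj, hClique, hInd⟩ := hG
  have hKI : ∀ x : V, x ∈ K ∨ x ∈ I := by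
    intro x
    have hx : x ∈ K ∪ I := by rw [hUnion]; exact Set.mem_univ x
    exact hx
  have hdisj' : ∀ x, x ∈ K → x ∈ I → False :=
    fun x hx hy => Set.disjoint_left.mp hDisj hx hy
  have hedgeK : ∀ a b, G.Adj a b → a ∈ K ∨ b ∈ K := by
    intro a b h
    rcases hKI a with ha | ha
    · exact Or.inl ha
    rcases hKI b with hb | hb
    · exact Or.inr hb
    · exact absurd h (hInd _ ha _ hb)
  set S := {U : Set V | IsMinCVC G U} with hSdef
  rcases S.eq_empty_or_nonempty with hS | hS
  · simp [hS]
  obtain ⟨U0, hU0⟩ := hS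
  have hVne : Nonempty V := ⟨(hU0.1.2.nonempty.some : ↥U0).val⟩
  suffices h : ∃ f : Set V → V, Set.InjOn f S by
    obtain ⟨f, hinj⟩ := h
    have hle := Set.ncard_le_ncard_of_injOn f (fun a _ => Set.mem_univ (f a)) hinj
      Set.finite_univ
    rwa [Set.ncard_univ, Nat.card_eq_fintype_card] at hle
  by_cases hE : ∃ a b, G.Adj a b
  · obtain ⟨a0, b0, hab⟩ := hE
    have hKne : K.Nonempty := by
      rcases hedgeK a0 b0 hab with h | h
      exacts [⟨a0, h⟩, ⟨b0, h⟩]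
    have hKCVC : IsCVC G K := by
      constructor
      · intro a b hadj
        exact hedgeK a b hadj
      · obtain ⟨k0, hk0⟩ := hKne
        apply aux_connected_hub G ⟨k0, hk0⟩
        rintro ⟨y, hy⟩
        rcases eq_or_ne y k0 with h | h
        · subst h; exact SimpleGraph.Reachable.refl _
        · exact SimpleGraph.Adj.reachable (hClique hy hk0 h)
    have hKmin : ∀ U, IsMinCVC G U → K ⊆ U → U = K := by
      intro U hU hKU
      by_contra hne
      exact hU.2 K (hKU.ssubset_of_ne (Ne.symm hne)) hKCVC
    refine ⟨fun U => if h : ∃ v, v ∈ K ∧ v ∉ U then h.choose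
      else (if hI : I.Nonempty then hI.some else Classical.choice hVne), ?_⟩
    intro U hU U' hU' hff
    have hUm : IsMinCVC G U := hU
    have hUm' : IsMinCVC G U' := hU'
    by_cases h1 : ∃ v, v ∈ K ∧ v ∉ U <;> by_cases h2 : ∃ v, v ∈ K ∧ v ∉ U'
    · have e1 : U = (K \ {h1.choose}) ∪ {u | u ∈ I ∧ G.Adj h1.choose u} :=
        aux_key G hUnion hDisj hClique hInd hab hUm h1.choose_spec.1 h1.choose_spec.2
      have e2 : U' = (K \ {h2.choose}) ∪ {u | u ∈ I ∧ G.Adj h2.choose u} :=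
        aux_key G hUnion hDisj hClique hInd hab hUm' h2.choose_spec.1 h2.choose_spec.2
      have : h1.choose = h2.choose := by
        simpa only [dif_pos h1, dif_pos h2] using hff
      rw [e1, e2, this]
    · -- U misses a vertex, U' = K
      exfalso
      have hU'K : U' = K := by
        apply hKmin U' hUm'
        intro w hw
        by_contra hwU
        exact h2 ⟨w, hw, hwU⟩
      have e1 : U = (K \ {h1.choose}) ∪ {u | u ∈ I ∧ G.Adj h1.choose u} :=
        aux_key G hUnion hDisj hClique hInd hab hUm h1.choose_spec.1 h1.choose_spec.2
      have hN : {u | u ∈ I ∧ G.Adj h1.choose u}.Nonempty := by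
        by_contra hNe
        rw [Set.not_nonempty_iff_eq_empty] at hNe
        rw [hNe, Set.union_empty] at e1
        refine hUm'.2 U ?_ hUm.1
        rw [hU'K, e1]
        exact Set.sdiff_singleton_ssubset.mpr h1.choose_spec.1
      have hIne : I.Nonempty := ⟨hN.some, hN.some_mem.1⟩
      have heq : h1.choose = hIne.some := by
        simpa only [dif_pos h1, dif_neg h2, dif_pos hIne] using hff
      have hImem : hIne.some ∈ I := hIne.some_mem
      exact hdisj' h1.choose h1.choose_spec.1 (by rw [heq]; exact hImem)
    · exfalso
      have hUK : U = K := by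
        apply hKmin U hUm
        intro w hw
        by_contra hwU
        exact h1 ⟨w, hw, hwU⟩
      have e2 : U' = (K \ {h2.choose}) ∪ {u | u ∈ I ∧ G.Adj h2.choose u} :=
        aux_key G hUnion hDisj hClique hInd hab hUm' h2.choose_spec.1 h2.choose_spec.2
      have hN : {u | u ∈ I ∧ G.Adj h2.choose u}.Nonempty := by
        by_contra hNe
        rw [Set.not_nonempty_iff_eq_empty] at hNe
        rw [hNe, Set.union_empty] at e2
        refine hUm.2 U' ?_ hUm'.1
        rw [hUK, e2]
        exact Set.sdiff_singleton_ssubset.mpr h2.choose_spec.1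
      have hIne : I.Nonempty := ⟨hN.some, hN.some_mem.1⟩
      have heq : hIne.some = h2.choose := by
        simpa only [dif_pos h2, dif_neg h1, dif_pos hIne] using hff
      have hImem : hIne.some ∈ I := hIne.some_mem
      exact hdisj' h2.choose h2.choose_spec.1 (by rw [← heq]; exact hImem)
    · have hUK : U = K := by
        apply hKmin U hUm
        intro w hw
        by_contra hwU
        exact h1 ⟨w, hw, hwU⟩
      have hU'K : U' = K := by
        apply hKmin U' hUm'
        intro w hw
        by_contra hwU
        exact h2 ⟨w, hw, hwU⟩
      rw [hUK, hU'K]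
  · push_neg at hE
    refine ⟨fun U => if h : U.Nonempty then h.some else Classical.choice hVne, ?_⟩
    have key : ∀ U, IsMinCVC G U → ∀ a ∈ U,
        U = {(if h : U.Nonempty then h.some else Classical.choice hVne : V)} := by
      intro U hU a ha
      have hne : U.Nonempty := ⟨a, ha⟩
      have hsub : ∀ y z : ↥U, y = z := by
        apply aux_eq_of_edgeless hU.1.2.preconnected
        intro x y hadj
        exact hE x.val y.val hadj
      ext b
      simp only [Set.mem_singleton_iff, dif_pos hne]
      constructor
      · intro hb
        exact congrArg Subtype.val (hsub ⟨b, hb⟩ ⟨hne.some, hne.some_mem⟩)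
      · rintro rfl
        exact hne.some_mem
    intro U hU U' hU' hff
    have hU1 : U.Nonempty := Set.nonempty_coe_sort.mp hU.1.2.nonempty
    have hU2 : U'.Nonempty := Set.nonempty_coe_sort.mp hU'.1.2.nonempty
    have hff' : (if h : U.Nonempty then h.some else Classical.choice hVne) =
        (if h : U'.Nonempty then h.some else Classical.choice hVne) := hff
    rw [key U hU _ hU1.some_mem, key U' hU' _ hU2.some_mem, hff']
end

section
/- Every cobipartite graph G on n vertices has at most n²/4 + n minimal connected vertex covers. -/
/-- `G` is cobipartite: its vertex set can be partitioned into two cliques. -/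
def IsCobipartite {V : Type*} (G : SimpleGraph V) : Prop :=
  ∃ K₁ K₂ : Set V, K₁ ∪ K₂ = Set.univ ∧ Disjoint K₁ K₂ ∧
    G.IsClique K₁ ∧ G.IsClique K₂

private lemma my_ncard_prod {α β : Type*} (s : Set α) (t : Set β) :
    (s ×ˢ t).ncard = s.ncard * t.ncard := by
  rw [← Nat.card_coe_set_eq, ← Nat.card_coe_set_eq, ← Nat.card_coe_set_eq,
    Nat.card_congr (Equiv.Set.prod s t), Nat.card_prod]

theorem stmt16 {V : Type*} [Fintype V] (G : SimpleGraph V) (hG : IsCobipartite G) :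
    ({U : Set V | IsMinCVC G U}.ncard : ℝ) ≤
      (Fintype.card V : ℝ) ^ 2 / 4 + Fintype.card V := by
  classical
  obtain ⟨K₁, K₂, hUn, hDisj, hC₁, hC₂⟩ := hG
  set n := Fintype.card V with hn
  set S := {U : Set V | IsMinCVC G U} with hS
  have hkn : K₁.ncard + K₂.ncard = n := by
    rw [← Set.ncard_union_eq hDisj, hUn, Set.ncard_univ, Nat.card_eq_fintype_card]
  by_cases huniv : (Set.univ : Set V) ∈ S
  · -- If univ is a minimal CVC, then S = {univ}
    have hn1 : 1 ≤ n := by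
      have hne : Nonempty V := by
        obtain ⟨v⟩ := huniv.1.2.nonempty
        exact ⟨v.1⟩
      rw [hn]; exact Fintype.card_pos
    have hsub : S ⊆ {(Set.univ : Set V)} := by
      intro U hU
      by_contra hne
      have hssub : U ⊂ Set.univ := by
        refine ⟨Set.subset_univ U, ?_⟩
        intro h
        exact hne (Set.Subset.antisymm (Set.subset_univ U) h)
      exact huniv.2 U hssub hU.1
    have hcard : S.ncard ≤ 1 := by
      calc S.ncard ≤ ({(Set.univ : Set V)} : Set (Set V)).ncard :=
            Set.ncard_le_ncard hsub (Set.toFinite _)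
        _ = 1 := Set.ncard_singleton _
    have h1n : (1 : ℝ) ≤ n := by exact_mod_cast hn1
    have : (S.ncard : ℝ) ≤ 1 := by exact_mod_cast hcard
    have hsq : (0 : ℝ) ≤ (n : ℝ) ^ 2 / 4 := by positivity
    linarith
  · -- univ is not a minimal CVC
    -- complements of covers are subsingleton within each clique
    have hsub : ∀ U ∈ S, ∀ (K : Set V), G.IsClique K → (Uᶜ ∩ K).Subsingleton := by
      intro U hU K hK a ha b hb
      by_contra hne
      rcases hU.1.1 (hK ha.2 hb.2 hne) with h | h
      · exact ha.1 h
      · exact hb.1 h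
    have hcompl : ∀ U : Set V, Uᶜ = (Uᶜ ∩ K₁) ∪ (Uᶜ ∩ K₂) := by
      intro U; rw [← Set.inter_union_distrib_left, hUn, Set.inter_univ]
    set e : Set V := ∅ with he
    set T₁ : Set (Set V) := insert e ((fun a : V => ({a} : Set V)) '' K₁) with hT₁
    set T₂ : Set (Set V) := insert e ((fun a : V => ({a} : Set V)) '' K₂) with hT₂
    set T : Set (Set V × Set V) := (T₁ ×ˢ T₂) \ {(e, e)} with hT
    have hmem : ∀ U ∈ S, (Uᶜ ∩ K₁, Uᶜ ∩ K₂) ∈ T := by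
      intro U hU
      have hUne : U ≠ Set.univ := fun h => huniv (h ▸ hU)
      have hUc : Uᶜ.Nonempty := by rwa [Set.nonempty_compl]
      have hmem₁ : ∀ (K : Set V), G.IsClique K → Uᶜ ∩ K ∈ insert e ((fun a : V => ({a} : Set V)) '' K) := by
        intro K hK
        rcases Set.eq_empty_or_nonempty (Uᶜ ∩ K) with h | ⟨a, ha⟩
        · rw [h]; exact Set.mem_insert _ _
        · exact Set.mem_insert_of_mem _ ⟨a, ha.2, ((hsub U hU K hK).eq_singleton_of_mem ha).symm⟩
      refine ⟨⟨hmem₁ K₁ hC₁, hmem₁ K₂ hC₂⟩, ?_⟩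
      intro hcon
      rw [Set.mem_singleton_iff, Prod.mk.injEq] at hcon
      have : Uᶜ = ∅ := by rw [hcompl U, hcon.1, hcon.2, he, Set.union_empty]
      rw [this] at hUc
      exact Set.not_nonempty_empty hUc
    have hfinj : Set.InjOn (fun U : Set V => (Uᶜ ∩ K₁, Uᶜ ∩ K₂)) S := by
      intro U hU U' hU' h
      have h1 : Uᶜ ∩ K₁ = U'ᶜ ∩ K₁ := congrArg Prod.fst h
      have h2 : Uᶜ ∩ K₂ = U'ᶜ ∩ K₂ := congrArg Prod.snd h
      have : Uᶜ = U'ᶜ := by rw [hcompl U, hcompl U', h1, h2]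
      exact compl_injective this
    have hcard : S.ncard ≤ T.ncard :=
      Set.ncard_le_ncard_of_injOn _ hmem hfinj (Set.toFinite T)
    -- compute T.ncard
    have hT₁card : T₁.ncard = K₁.ncard + 1 := by
      rw [hT₁, Set.ncard_insert_of_notMem, Set.ncard_image_of_injective _ Set.singleton_injective]
      rintro ⟨a, -, ha⟩
      exact Set.singleton_ne_empty a (by simpa [he] using ha)
    have hT₂card : T₂.ncard = K₂.ncard + 1 := by
      rw [hT₂, Set.ncard_insert_of_notMem, Set.ncard_image_of_injective _ Set.singleton_injective]
      rintro ⟨a, -, ha⟩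
      exact Set.singleton_ne_empty a (by simpa [he] using ha)
    have hee : (e, e) ∈ T₁ ×ˢ T₂ := ⟨Set.mem_insert _ _, Set.mem_insert _ _⟩
    have hTcard : T.ncard = (K₁.ncard + 1) * (K₂.ncard + 1) - 1 := by
      rw [hT, Set.ncard_diff_singleton_of_mem hee, my_ncard_prod, hT₁card, hT₂card]
    have hbound : S.ncard ≤ K₁.ncard * K₂.ncard + n := by
      have hexp : (K₁.ncard + 1) * (K₂.ncard + 1) = K₁.ncard * K₂.ncard + (K₁.ncard + K₂.ncard) + 1 := by
        ring
      rw [hTcard, hexp, hkn] at hcard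
      omega
    have hreal : (S.ncard : ℝ) ≤ (K₁.ncard : ℝ) * K₂.ncard + n := by exact_mod_cast hbound
    have hknr : (K₁.ncard : ℝ) + K₂.ncard = n := by exact_mod_cast hkn
    nlinarith [sq_nonneg ((K₁.ncard : ℝ) - K₂.ncard)]
end

section
/- For every positive integer k, let T be the tree with vertex set {c} ∪ {a_1, …, a_k} ∪ {b_1, …, b_k} and edge set {c a_i : 1 ≤ i ≤ k} ∪ {a_i b_i : 1 ≤ i ≤ k}. Then T is a tree on n = 2k+1 vertices with at least 2^k = 2^((n−1)/2) minimal vertex covers. -/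
/-- `U` is a minimal vertex cover of `G`. -/
def IsMinVC {V : Type*} (G : SimpleGraph V) (U : Set V) : Prop :=
  IsVertexCover G U ∧ ∀ W : Set V, W ⊂ U → ¬ IsVertexCover G W

/-- The tree with center `c = none`, vertices `a_i = some (i, 0)` and
`b_i = some (i, 1)`, and edges `c a_i` and `a_i b_i` for `1 ≤ i ≤ k`. -/
def spiderTree (k : ℕ) : SimpleGraph (Option (Fin k × Fin 2)) :=
  SimpleGraph.fromRel (fun a b =>
    (a = none ∧ ∃ i : Fin k, b = some (i, 0)) ∨
    (∃ i : Fin k, a = some (i, 0) ∧ b = some (i, 1)))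

lemma adj_iff {k} {x y : Option (Fin k × Fin 2)} :
  (spiderTree k).Adj x y ↔
    (x = none ∧ ∃ i, y = some (i,0)) ∨ (y = none ∧ ∃ i, x = some (i,0)) ∨
    (∃ i, x = some (i,0) ∧ y = some (i,1)) ∨ (∃ i, y = some (i,0) ∧ x = some (i,1)) := by
  simp only [spiderTree, SimpleGraph.fromRel_adj]
  constructor
  · rintro ⟨hne, (⟨rfl, i, rfl⟩ | ⟨i, rfl, rfl⟩) | (⟨rfl, i, rfl⟩ | ⟨i, rfl, rfl⟩)⟩
    · exact Or.inl ⟨rfl, i, rfl⟩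
    · exact Or.inr (Or.inr (Or.inl ⟨i, rfl, rfl⟩))
    · exact Or.inr (Or.inl ⟨rfl, i, rfl⟩)
    · exact Or.inr (Or.inr (Or.inr ⟨i, rfl, rfl⟩))
  · rintro (⟨rfl, i, rfl⟩ | ⟨rfl, i, rfl⟩ | ⟨i, rfl, rfl⟩ | ⟨i, rfl, rfl⟩) <;>
      refine ⟨by simp, ?_⟩
    · exact Or.inl (Or.inl ⟨rfl, i, rfl⟩)
    · exact Or.inr (Or.inl ⟨rfl, i, rfl⟩)
    · exact Or.inl (Or.inr ⟨i, rfl, rfl⟩)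
    · exact Or.inr (Or.inr ⟨i, rfl, rfl⟩)

lemma walk_closed {V : Type*} {G : SimpleGraph V} {S : Set V}
    (h : ∀ x ∈ S, ∀ y, G.Adj x y → y ∈ S) {u v : V} (p : G.Walk u v) : u ∈ S → v ∈ S := by
  induction p with
  | nil => exact id
  | cons ha _ ih => exact fun hu => ih (h _ hu _ ha)

lemma spider_connected (k : ℕ) : (spiderTree k).Connected := by
  rw [SimpleGraph.connected_iff]
  refine ⟨fun x y => ?_, ⟨none⟩⟩
  have key : ∀ z : Option (Fin k × Fin 2), (spiderTree k).Reachable none z := by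
    rintro (_ | ⟨i, j⟩)
    · rfl
    · have h1 : (spiderTree k).Adj none (some (i, 0)) := adj_iff.mpr (Or.inl ⟨rfl, i, rfl⟩)
      have h2 : (spiderTree k).Adj (some (i, 0)) (some (i, 1)) :=
        adj_iff.mpr (Or.inr (Or.inr (Or.inl ⟨i, rfl, rfl⟩)))
      fin_cases j
      · exact h1.reachable
      · exact h1.reachable.trans h2.reachable
  exact (key x).symm.trans (key y)

lemma spider_acyclic (k : ℕ) : (spiderTree k).IsAcyclic := by
  rw [SimpleGraph.isAcyclic_iff_forall_adj_isBridge]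
  have bridge1 : ∀ i : Fin k, ¬ (spiderTree k \
      SimpleGraph.fromEdgeSet {s((none : Option (Fin k × Fin 2)), some (i, 0))}).Reachable
      none (some (i, 0)) := by
    intro i ⟨p⟩
    have := walk_closed (G := spiderTree k \
        SimpleGraph.fromEdgeSet {s((none : Option (Fin k × Fin 2)), some (i, 0))})
      (S := {x | x ≠ some (i, 0) ∧ x ≠ some (i, 1)}) ?_ p (by simp)
    · exact this.1 rfl
    · rintro x ⟨hx0, hx1⟩ y hadj
      obtain ⟨hadj, hne⟩ := hadj
      rcases adj_iff.mp hadj with ⟨rfl, j, rfl⟩ | ⟨rfl, j, rfl⟩ | ⟨j, rfl, rfl⟩ | ⟨j, rfl, rfl⟩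
      · refine ⟨fun h => ?_, by simp⟩
        obtain rfl : j = i := by simpa using h
        exact hne (by simp [SimpleGraph.fromEdgeSet_adj])
      · exact ⟨by simp, by simp⟩
      · refine ⟨by simp, fun h => hx0 ?_⟩
        obtain rfl : j = i := by simpa using h
        rfl
      · refine ⟨fun h => hx1 ?_, by simp⟩
        obtain rfl : j = i := by simpa using h
        rfl
  have bridge2 : ∀ i : Fin k, ¬ (spiderTree k \
      SimpleGraph.fromEdgeSet {s((some (i, 0) : Option (Fin k × Fin 2)), some (i, 1))}).Reachable
      (some (i, 0)) (some (i, 1)) := by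
    intro i ⟨p⟩
    have := walk_closed (G := spiderTree k \
        SimpleGraph.fromEdgeSet {s((some (i, 0) : Option (Fin k × Fin 2)), some (i, 1))})
      (S := {x | x ≠ some (i, 1)}) ?_ p (by simp)
    · exact this rfl
    · rintro x hx y hadj
      obtain ⟨hadj, hne⟩ := hadj
      rcases adj_iff.mp hadj with ⟨rfl, j, rfl⟩ | ⟨rfl, j, rfl⟩ | ⟨j, rfl, rfl⟩ | ⟨j, rfl, rfl⟩
      · simp
      · simp
      · intro h
        obtain rfl : j = i := by simpa using h
        exact hne (by simp [SimpleGraph.fromEdgeSet_adj])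
      · simp
  intro x y hadj
  rcases adj_iff.mp hadj with ⟨rfl, i, rfl⟩ | ⟨rfl, i, rfl⟩ | ⟨i, rfl, rfl⟩ | ⟨i, rfl, rfl⟩
  · exact bridge1 i
  · rw [SimpleGraph.isBridge_iff]
    refine fun h => bridge1 i ?_
    rw [Sym2.eq_swap] at h
    exact h.symm
  · exact bridge2 i
  · rw [SimpleGraph.isBridge_iff]
    refine fun h => bridge2 i ?_
    rw [Sym2.eq_swap] at h
    exact h.symm

/-- the candidate minimal cover attached to a set `S` of indices -/
def cov (k : ℕ) (S : Finset (Fin k)) : Set (Option (Fin k × Fin 2)) :=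
  if S = Finset.univ then {x | ∃ i, x = some (i, 0)}
  else {none} ∪ {x | ∃ i ∈ S, x = some (i, 0)} ∪ {x | ∃ i ∉ S, x = some (i, 1)}

lemma cover_mono {V : Type*} {G : SimpleGraph V} {U W : Set V} (h : U ⊆ W)
    (hU : IsVertexCover G U) : IsVertexCover G W :=
  fun a b hab => (hU hab).imp (@h a) (@h b)

lemma isMinVC_of {V : Type*} {G : SimpleGraph V} {U : Set V} (hU : IsVertexCover G U)
    (h : ∀ v ∈ U, ¬ IsVertexCover G (U \ {v})) : IsMinVC G U := by
  refine ⟨hU, fun W hW hWc => ?_⟩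
  obtain ⟨v, hvU, hvW⟩ := Set.exists_of_ssubset hW
  exact h v hvU (cover_mono (fun x hx => ⟨hW.1 hx, fun hxv => hvW (hxv ▸ hx)⟩) hWc)

lemma cov_minVC (k : ℕ) (S : Finset (Fin k)) : IsMinVC (spiderTree k) (cov k S) := by
  by_cases hS : S = Finset.univ
  · subst hS
    rw [show cov k Finset.univ = {x | ∃ i, x = some (i, 0)} from if_pos rfl]
    refine isMinVC_of ?_ ?_
    · intro a b hab
      rcases adj_iff.mp hab with ⟨rfl, i, rfl⟩ | ⟨rfl, i, rfl⟩ | ⟨i, rfl, rfl⟩ | ⟨i, rfl, rfl⟩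
      · exact Or.inr ⟨i, rfl⟩
      · exact Or.inl ⟨i, rfl⟩
      · exact Or.inl ⟨i, rfl⟩
      · exact Or.inr ⟨i, rfl⟩
    · rintro v ⟨i, rfl⟩ hc
      have hab : (spiderTree k).Adj (some (i, 0)) (some (i, 1)) :=
        adj_iff.mpr (Or.inr (Or.inr (Or.inl ⟨i, rfl, rfl⟩)))
      rcases hc hab with ⟨⟨j, hj⟩, h2⟩ | ⟨⟨j, hj⟩, _⟩
      · exact h2 rfl
      · simp [Prod.ext_iff] at hj
  · rw [show cov k S = {none} ∪ {x | ∃ i ∈ S, x = some (i, 0)} ∪ {x | ∃ i ∉ S, x = some (i, 1)}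
      from if_neg hS]
    refine isMinVC_of ?_ ?_
    · intro a b hab
      rcases adj_iff.mp hab with ⟨rfl, i, rfl⟩ | ⟨rfl, i, rfl⟩ | ⟨i, rfl, rfl⟩ | ⟨i, rfl, rfl⟩
      · exact Or.inl (Or.inl (Or.inl rfl))
      · exact Or.inr (Or.inl (Or.inl rfl))
      · by_cases hi : i ∈ S
        · exact Or.inl (Or.inl (Or.inr ⟨i, hi, rfl⟩))
        · exact Or.inr (Or.inr ⟨i, hi, rfl⟩)
      · by_cases hi : i ∈ S
        · exact Or.inr (Or.inl (Or.inr ⟨i, hi, rfl⟩))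
        · exact Or.inl (Or.inr ⟨i, hi, rfl⟩)
    · rintro v ((rfl | ⟨i, hi, rfl⟩) | ⟨i, hi, rfl⟩) hc
      · -- removed the center: edge c–a_j for j ∉ S is uncovered
        obtain ⟨j, hj⟩ : ∃ j, j ∉ S := by
          by_contra h
          push_neg at h
          exact hS (Finset.eq_univ_iff_forall.mpr h)
        have hab : (spiderTree k).Adj none (some (j, 0)) :=
          adj_iff.mpr (Or.inl ⟨rfl, j, rfl⟩)
        rcases hc hab with ⟨h1, h2⟩ | ⟨h1, _⟩
        · exact h2 rfl
        · rcases h1 with (h | ⟨l, hlS, hl⟩) | ⟨l, hl, hl'⟩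
          · simp at h
          · obtain rfl : j = l := by simpa [Prod.ext_iff] using hl
            exact hj hlS
          · simp [Prod.ext_iff] at hl'
      · -- removed a_i with i ∈ S: edge a_i–b_i uncovered
        have hab : (spiderTree k).Adj (some (i, 0)) (some (i, 1)) :=
          adj_iff.mpr (Or.inr (Or.inr (Or.inl ⟨i, rfl, rfl⟩)))
        rcases hc hab with ⟨_, h2⟩ | ⟨h1, _⟩
        · exact h2 rfl
        · rcases h1 with (h | ⟨l, _, hl⟩) | ⟨l, hl, hl'⟩
          · simp at h
          · simp [Prod.ext_iff] at hl
          · obtain rfl : i = l := by simpa [Prod.ext_iff] using hl'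
            exact hl hi
      · -- removed b_i with i ∉ S: edge a_i–b_i uncovered
        have hab : (spiderTree k).Adj (some (i, 0)) (some (i, 1)) :=
          adj_iff.mpr (Or.inr (Or.inr (Or.inl ⟨i, rfl, rfl⟩)))
        rcases hc hab with ⟨h1, _⟩ | ⟨_, h2⟩
        · rcases h1 with (h | ⟨l, hl, hl'⟩) | ⟨l, _, hl'⟩
          · simp at h
          · obtain rfl : i = l := by simpa [Prod.ext_iff] using hl'
            exact hi hl
          · simp [Prod.ext_iff] at hl'
        · exact h2 rfl

lemma cov_inj (k : ℕ) : Function.Injective (cov k) := by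
  intro S T h
  have hmem : ∀ (S : Finset (Fin k)) (i : Fin k),
      some (i, 0) ∈ cov k S ↔ (S = Finset.univ ∨ i ∈ S) := by
    intro S i
    unfold cov
    split_ifs with hS
    · simp [hS]
    · simp only [hS, false_or]
      constructor
      · rintro ((h | ⟨l, hl, hl'⟩) | ⟨l, _, hl'⟩)
        · simp at h
        · obtain rfl : i = l := by simpa [Prod.ext_iff] using hl'
          exact hl
        · simp [Prod.ext_iff] at hl'
      · intro hi
        exact Or.inl (Or.inr ⟨i, hi, rfl⟩)
  have hnone : ∀ S : Finset (Fin k), (none ∈ cov k S ↔ S ≠ Finset.univ) := by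
    intro S
    unfold cov
    split_ifs with hS
    · simp [hS]
    · simp [hS]
  by_cases hS : S = Finset.univ <;> by_cases hT : T = Finset.univ
  · rw [hS, hT]
  · exact absurd (h ▸ (hnone T).mpr hT) (by simp [hnone, hS])
  · exact absurd (h ▸ (hnone S).mpr hS) (by simp [h, hnone, hT])
  · ext i
    constructor
    · intro hi
      rcases (hmem T i).mp (h ▸ (hmem S i).mpr (Or.inr hi)) with h' | h'
      · exact absurd h' hT
      · exact h'
    · intro hi
      rcases (hmem S i).mp (h ▸ (hmem T i).mpr (Or.inr hi)) with h' | h'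
      · exact absurd h' hS
      · exact h'

lemma count_part (k : ℕ) :
    2 ^ k ≤ {U : Set (Option (Fin k × Fin 2)) | IsMinVC (spiderTree k) U}.ncard := by
  have h1 : Set.range (cov k) ⊆ {U | IsMinVC (spiderTree k) U} := by
    rintro _ ⟨S, rfl⟩
    exact cov_minVC k S
  have h2 : (Set.range (cov k)).ncard = 2 ^ k := by
    rw [← Set.image_univ, Set.ncard_image_of_injective _ (cov_inj k), Set.ncard_univ,
      Nat.card_eq_fintype_card, Fintype.card_finset, Fintype.card_fin]
  rw [← h2]
  exact Set.ncard_le_ncard h1 (Set.toFinite _)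

theorem stmt18 (k : ℕ) (hk : 0 < k) :
    (spiderTree k).Connected ∧ (spiderTree k).IsAcyclic ∧
    Fintype.card (Option (Fin k × Fin 2)) = 2 * k + 1 ∧
    2 ^ k ≤ {U : Set (Option (Fin k × Fin 2)) | IsMinVC (spiderTree k) U}.ncard := by
  exact ⟨spider_connected k, spider_acyclic k, by simp [mul_comm], count_part k⟩
end
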